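/- Let β̄_0 < β̄_1 < ⋯ < β̄_g (g ≥ 2) be positive integers with gcd(β̄_0, …, β̄_g) = 1 and with e_k := gcd(β̄_0, …, β̄_k) strictly decreasing, and set n_k := e_{k−1}/e_k. Let N be the Merle datum of (β̄_0, …, β̄_g), i.e. L_k = (n_k − 1)·β̄_k and M_k = n_1⋯n_{k−1}·(n_k − 1) for k = 1, …, g. Then 1 + M_1 + ⋯ + M_j = n_1⋯n_j for every 1 ≤ j ≤ g, and the abrasion A(N) equals the Merle datum of the sequence (β̄_0/e_{g−1}, β̄_1/e_{g−1}, …, β̄_{g−1}/e_{g−1}). -/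
import Mathlib


/-- The abrasion `A(N)` of a Newton-polygon datum with `r` edges:
`L̃_i = ((1 + M_1 + ⋯ + M_{r−1})/(1 + M_1 + ⋯ + M_r))·L_i`, the `M_i` are unchanged. -/
def abrNP (p : (ℕ → ℚ) × (ℕ → ℚ)) (r : ℕ) : (ℕ → ℚ) × (ℕ → ℚ) :=
  (fun i => ((1 + ∑ k ∈ Finset.Icc 1 (r - 1), p.2 k) /
      (1 + ∑ k ∈ Finset.Icc 1 r, p.2 k)) * p.1 i,
   p.2)

/-- Let `β̄_0 < β̄_1 < ⋯ < β̄_g` (`g ≥ 2`) be positive integers with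
`gcd(β̄_0, …, β̄_g) = 1` and strictly decreasing partial gcds `e_k`, and let
`n_k := e_{k−1}/e_k`. Let `N` be the Merle datum of `(β̄_0, …, β̄_g)`, i.e.
`L_k = (n_k − 1)·β̄_k` and `M_k = n_1⋯n_{k−1}·(n_k − 1)`. Then
`1 + M_1 + ⋯ + M_j = n_1⋯n_j` for every `1 ≤ j ≤ g`, and the abrasion `A(N)` equals the
Merle datum of `(β̄_0/e_{g−1}, β̄_1/e_{g−1}, …, β̄_{g−1}/e_{g−1})`. -/
theorem abrasion_of_merle_datum
    (g : ℕ) (hg : 2 ≤ g) (bb : ℕ → ℕ)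
    (hpos : ∀ k, k ≤ g → 0 < bb k)
    (hmono : ∀ k, k < g → bb k < bb (k + 1))
    (e : ℕ → ℕ) (he : ∀ k, e k = (Finset.range (k + 1)).gcd bb)
    (hone : e g = 1)
    (hdec : ∀ k, 1 ≤ k → k ≤ g → e k < e (k - 1))
    (n : ℕ → ℕ) (hn : ∀ k, 1 ≤ k → n k = e (k - 1) / e k)
    (p : (ℕ → ℚ) × (ℕ → ℚ))
    (hpL : ∀ k, 1 ≤ k → k ≤ g → p.1 k = ((n k : ℚ) - 1) * bb k)
    (hpM : ∀ k, 1 ≤ k → k ≤ g →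
      p.2 k = ((∏ j ∈ Finset.Icc 1 (k - 1), n j : ℕ) : ℚ) * ((n k : ℚ) - 1))
    (bb' : ℕ → ℕ) (hbb' : ∀ k, bb' k = bb k / e (g - 1))
    (e' : ℕ → ℕ) (he' : ∀ k, e' k = (Finset.range (k + 1)).gcd bb')
    (n' : ℕ → ℕ) (hn' : ∀ k, 1 ≤ k → n' k = e' (k - 1) / e' k) :
    (∀ j, 1 ≤ j → j ≤ g →
      1 + ∑ k ∈ Finset.Icc 1 j, p.2 k = ((∏ k ∈ Finset.Icc 1 j, n k : ℕ) : ℚ)) ∧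
    (∀ k, 1 ≤ k → k ≤ g - 1 →
      (abrNP p g).1 k = ((n' k : ℚ) - 1) * bb' k ∧
      (abrNP p g).2 k =
        ((∏ j ∈ Finset.Icc 1 (k - 1), n' j : ℕ) : ℚ) * ((n' k : ℚ) - 1)) := by
  -- basic facts about e
  have hdvd_step : ∀ k, e (k + 1) ∣ e k := by
    intro k
    rw [he, he, Finset.range_add_one, Finset.gcd_insert]
    exact gcd_dvd_right _ _
  have hdvd : ∀ j k, j ≤ k → e k ∣ e j := by
    intro j k hjk
    induction k with
    | zero => simpa [Nat.le_zero.mp hjk] using dvd_refl (e 0)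
    | succ m ih =>
      rcases Nat.lt_or_ge j (m + 1) with h | h
      · exact (hdvd_step m).trans (ih (Nat.lt_succ_iff.mp h))
      · have : j = m + 1 := le_antisymm hjk h
        simp [this]
  have hepos : ∀ k, 0 < e k := by
    intro k
    have h0 : (0 : ℕ) ∈ Finset.range (k + 1) := by simp
    have hd : e k ∣ bb 0 := by rw [he]; exact Finset.gcd_dvd h0
    exact Nat.pos_of_dvd_of_pos hd (hpos 0 (by omega))
  have hnmul : ∀ k, 1 ≤ k → n k * e k = e (k - 1) := by
    intro k hk
    rw [hn k hk]
    have : e k ∣ e (k - 1) := by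
      have : k - 1 + 1 = k := by omega
      rw [← this]; exact hdvd_step _
    exact Nat.div_mul_cancel this
  have hprod : ∀ j, (∏ k ∈ Finset.Icc 1 j, n k) * e j = e 0 := by
    intro j
    induction j with
    | zero => simp
    | succ m ih =>
      rw [Finset.prod_Icc_succ_top (by omega), mul_assoc, hnmul (m + 1) (by omega)]
      simpa using ih
  -- first claim
  have claim1 : ∀ j, 1 ≤ j → j ≤ g →
      1 + ∑ k ∈ Finset.Icc 1 j, p.2 k = ((∏ k ∈ Finset.Icc 1 j, n k : ℕ) : ℚ) := by
    intro j hj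
    induction j, hj using Nat.le_induction with
    | base =>
      intro _
      rw [Finset.Icc_self, Finset.sum_singleton, Finset.prod_singleton,
        hpM 1 le_rfl (by omega)]
      simp
    | succ m hm ih =>
      intro hmg
      rw [Finset.sum_Icc_succ_top (by omega), Finset.prod_Icc_succ_top (by omega),
        ← add_assoc, ih (by omega), hpM (m + 1) (by omega) hmg]
      have : m + 1 - 1 = m := by omega
      rw [this]
      push_cast
      ring
  refine ⟨claim1, ?_⟩
  -- relation between e' and e
  have hbbdvd : ∀ k, k ≤ g - 1 → e (g - 1) ∣ bb k := by
    intro k hk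
    have : k ∈ Finset.range (g - 1 + 1) := by simp; omega
    rw [he]
    exact Finset.gcd_dvd this
  have hec : ∀ j, j ≤ g - 1 → e (g - 1) * e' j = e j := by
    intro j hj
    have h1 : e j = (Finset.range (j + 1)).gcd (fun i => e (g - 1) * bb' i) := by
      rw [he j]
      apply Finset.gcd_congr rfl
      intro i hi
      rw [hbb' i]
      exact (Nat.mul_div_cancel' (hbbdvd i (by simp at hi; omega))).symm
    rw [he' j, h1, Finset.gcd_mul_left]
    simp
  have hn'eq : ∀ k, 1 ≤ k → k ≤ g - 1 → n' k = n k := by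
    intro k hk1 hk2
    have h1 : e (g - 1) * e' k = e k := hec k hk2
    have h2 : e (g - 1) * e' (k - 1) = e (k - 1) := hec (k - 1) (by omega)
    have h3 : n k * e k = e (k - 1) := hnmul k hk1
    have h4 : n k * (e (g - 1) * e' k) = e (g - 1) * e' (k - 1) := by rw [h1, h2, h3]
    have hcpos : 0 < e (g - 1) := hepos _
    have h5 : n k * e' k = e' (k - 1) := by
      apply Nat.eq_of_mul_eq_mul_left hcpos
      rw [← h4]; ring
    have he'pos : 0 < e' k := by
      have := hepos k
      rcases Nat.eq_zero_or_pos (e' k) with h | h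
      · rw [h, mul_zero] at h1; omega
      · exact h
    rw [hn' k hk1, ← h5, Nat.mul_div_cancel _ he'pos]
  -- second claim
  intro k hk1 hk2
  have hA : 1 + ∑ j ∈ Finset.Icc 1 (g - 1), p.2 j
      = ((∏ j ∈ Finset.Icc 1 (g - 1), n j : ℕ) : ℚ) := claim1 (g - 1) (by omega) (by omega)
  have hB : 1 + ∑ j ∈ Finset.Icc 1 g, p.2 j
      = ((∏ j ∈ Finset.Icc 1 g, n j : ℕ) : ℚ) := claim1 g (by omega) (by omega)
  have hPA : (∏ j ∈ Finset.Icc 1 (g - 1), n j) * e (g - 1) = e 0 := hprod (g - 1)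
  have hPB : (∏ j ∈ Finset.Icc 1 g, n j) = e 0 := by
    have := hprod g; rw [hone, mul_one] at this; exact this
  constructor
  · show (1 + ∑ j ∈ Finset.Icc 1 (g - 1), p.2 j) /
        (1 + ∑ j ∈ Finset.Icc 1 g, p.2 j) * p.1 k = _
    rw [hA, hB, hPB, hpL k hk1 (by omega), hn'eq k hk1 hk2, hbb' k]
    have hcdvd : e (g - 1) ∣ bb k := hbbdvd k hk2
    have hcast : ((bb k / e (g - 1) : ℕ) : ℚ) = (bb k : ℚ) / (e (g - 1) : ℚ) := by
      rw [Nat.cast_div hcdvd (by exact_mod_cast (hepos (g - 1)).ne')]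
    rw [hcast]
    have hAc : ((∏ j ∈ Finset.Icc 1 (g - 1), n j : ℕ) : ℚ) * (e (g - 1) : ℚ)
        = (e 0 : ℚ) := by exact_mod_cast congrArg (Nat.cast : ℕ → ℚ) hPA
    have he0 : ((e 0 : ℕ) : ℚ) ≠ 0 := by exact_mod_cast (hepos 0).ne'
    have hc : ((e (g - 1) : ℕ) : ℚ) ≠ 0 := by exact_mod_cast (hepos (g - 1)).ne'
    push_cast at hAc ⊢
    field_simp
    linear_combination ((n k : ℚ) - 1) * (bb k : ℚ) * hAc
  · show p.2 k = _
    have hprodeq : (∏ j ∈ Finset.Icc 1 (k - 1), n' j) = ∏ j ∈ Finset.Icc 1 (k - 1), n j := by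
      apply Finset.prod_congr rfl
      intro j hj
      simp only [Finset.mem_Icc] at hj
      exact hn'eq j hj.1 (by omega)
    rw [hprodeq, hn'eq k hk1 hk2]
    exact hpM k hk1 (by omega)
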